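/- arXiv:1412.6768 — 4 statements merged into one kernel-verified Lean document; each statement's English description precedes it below -/
import Mathlib

section
/- Let N ≥ 1 and let x_0, x_1, …, x_N be distinct points on the unit circle, the boundary of the open unit disk D ⊂ ℝ². Let Ω be a nonempty open subset of ℝ² whose closure is contained in D. Then the family of functions Ω → ℝ given by x ↦ ⟨G_i(x), G_j(x)⟩, indexed by the pairs (i, j) with 1 ≤ i ≤ j ≤ N, is linearly independent over ℝ (equivalently, the family {∇u_i⁰ · ∇u_j⁰}_{1 ≤ i ≤ j ≤ N} of pointwise inner products of gradients is linearly independent as functions on Ω). (This is Proposition 4.1 of the paper, the case of the disk.) -/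
open MeasureTheory Finset

/-- The vector field `G_n(x) = (x - x_n)/‖x - x_n‖² - (x - x_0)/‖x - x_0‖²`,
where electrode `n+1` (for `n : Fin N`) is located at `x n.succ` and electrode `0` at `x 0`.
One has `G_n = -π ∇u_n⁰` for the Neumann-function differences `u_n⁰` of the unit disk. -/
noncomputable def G {N : ℕ} (x : Fin (N + 1) → EuclideanSpace ℝ (Fin 2)) (n : Fin N)
    (p : EuclideanSpace ℝ (Fin 2)) : EuclideanSpace ℝ (Fin 2) :=
  (‖p - x n.succ‖ ^ 2)⁻¹ • (p - x n.succ) - (‖p - x 0‖ ^ 2)⁻¹ • (p - x 0)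

/-!
Identify `ℝ²` with `ℂ`. Then `G_k` is the complex conjugate of the rational function
`g_k(z) = (z - a_k)⁻¹ - (z - a_0)⁻¹` and `⟨G_i, G_j⟩ = Re (g_i ḡ_j)`. After symmetrising the
coefficients, a vanishing combination on `Ω` reads `H(z, z̄) = 0` for
`H(z, w) = ∑ β_ij g_i(z) h_j(w)`, where `h_j` is `g_j` with conjugated poles. Since
`z ↦ H(z, z̄)` is real analytic off the finitely many poles, whose complement is connected, it
vanishes there; and since `z` and `z̄` can be varied independently along complex lines, `H`
vanishes identically. Taking residues at `z = a_i` and then at `w = ā_j` gives `β_ij = 0`, and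
hence `α = 0`.
-/

open Complex ComplexConjugate Filter Topology Set

theorem Set.Finite.eventually_nhdsNE_notMem {X : Type*} [TopologicalSpace X] [T1Space X]
    {s : Set X} (hs : s.Finite) (x : X) :
    ∀ᶠ z in 𝓝[≠] x, z ∉ s :=
  hs.eventually_cofinite_notMem.filter_mono (nhdsNE_le_cofinite x)

theorem Complex.isPreconnected_compl_of_finite {s : Set ℂ} (hs : s.Finite) : IsPreconnected sᶜ :=
  (hs.countable.isPathConnected_compl_of_one_lt_rank
    (by rw [rank_real_complex]; exact Nat.one_lt_ofNat)).isConnected.isPreconnected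

theorem AnalyticOnNhd.eqOn_zero_of_ofReal_eq_zero {B : Set ℂ} (hB : B.Finite) {φ : ℂ → ℂ}
    (hφ : AnalyticOnNhd ℂ φ Bᶜ) (h : ∀ r : ℝ, (r : ℂ) ∉ B → φ r = 0) : EqOn φ 0 Bᶜ := by
  obtain ⟨t, ht⟩ := (hB.preimage ofReal_injective.injOn).infinite_compl.nonempty
  have hreal : Tendsto ofReal (𝓝[≠] t) (𝓝[≠] (t : ℂ)) :=
    tendsto_nhdsWithin_iff.2 ⟨continuous_ofReal.continuousAt.tendsto.mono_left nhdsWithin_le_nhds,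
      eventually_nhdsWithin_of_forall fun r hr => by simpa using hr⟩
  have hfreq : ∃ᶠ z in 𝓝[≠] (t : ℂ), φ z = 0 :=
    hreal.frequently ((hB.preimage ofReal_injective.injOn).eventually_nhdsNE_notMem t |>.mono
      fun r hr => h r hr).frequently
  exact hφ.eqOn_zero_of_preconnected_of_frequently_eq_zero (isPreconnected_compl_of_finite hB) ht
    hfreq

theorem tendsto_sub_mul_inv_sub {A b : ℂ} :
    Tendsto (fun z => (z - A) * (z - b)⁻¹) (𝓝[≠] A) (𝓝 (if b = A then 1 else 0)) := by
  split_ifs with hb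
  · subst hb
    refine tendsto_const_nhds.congr' ?_
    filter_upwards [self_mem_nhdsWithin] with z hz
    exact (mul_inv_cancel₀ (sub_ne_zero.2 hz)).symm
  · have hcont : ContinuousAt (fun z => (z - A) * (z - b)⁻¹) A :=
      by fun_prop (disch := exact sub_ne_zero.2 (Ne.symm hb))
    simpa using hcont.tendsto.mono_left nhdsWithin_le_nhds

theorem eq_zero_of_sum_mul_inv_sub_eq_zero {ι : Type*} [Fintype ι] [DecidableEq ι]
    {b : ι → ℂ} (hb : Function.Injective b) {c : ι → ℂ}
    (h : ∀ z ∉ Set.range b, ∑ i, c i * (z - b i)⁻¹ = 0) (m : ι) : c m = 0 := by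
  have hlim : Tendsto (fun z => (z - b m) * ∑ i, c i * (z - b i)⁻¹) (𝓝[≠] b m) (𝓝 (c m)) := by
    simp_rw [Finset.mul_sum, mul_left_comm _ (c _)]
    simpa [hb.eq_iff] using tendsto_finsetSum Finset.univ fun i _ =>
      (tendsto_sub_mul_inv_sub (A := b m) (b := b i)).const_mul (c i)
  refine tendsto_nhds_unique hlim (tendsto_const_nhds.congr' ?_)
  filter_upwards [(Set.finite_range b).eventually_nhdsNE_notMem (b m)] with z hz
  rw [h z hz, mul_zero]

section ConjugateVariables

variable {A B : Set ℂ} {H : ℂ × ℂ → ℂ}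

theorem apply_conj_eq_zero_of_eq_zero_on_open (hA : A.Finite) (hB : B.Finite)
    (hH : ∀ z ∉ A, ∀ w ∉ B, AnalyticAt ℂ H (z, w)) {U : Set ℂ} (hU : IsOpen U)
    (hUne : U.Nonempty) (h : ∀ z ∈ U, z ∉ A → conj z ∉ B → H (z, conj z) = 0)
    {z : ℂ} (hz : z ∉ A) (hzB : conj z ∉ B) : H (z, conj z) = 0 := by
  set S := A ∪ conj ⁻¹' B
  have hS : S.Finite := hA.union (hB.preimage (RingHom.injective _).injOn)
  have hΦ : AnalyticOnNhd ℝ (fun z => H (z, conj z)) Sᶜ := by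
    intro z hz
    rw [mem_compl_iff, mem_union, not_or] at hz
    exact (hH _ hz.1 _ hz.2).restrictScalars.comp (f := fun z => (z, conj z))
      (analyticAt_id.prod (conjCLE.toContinuousLinearMap.analyticAt z))
  obtain ⟨z₀, hz₀U, hz₀S⟩ : (U \ S).Nonempty := by
    obtain ⟨u, hu⟩ := hUne
    have hUu : ∀ᶠ z in 𝓝[≠] u, z ∈ U := mem_nhdsWithin_of_mem_nhds (hU.mem_nhds hu)
    exact (hUu.and (hS.eventually_nhdsNE_notMem u)).exists
  have hev : (fun z => H (z, conj z)) =ᶠ[𝓝 z₀] 0 := by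
    filter_upwards [(hU.sdiff hS.isClosed).mem_nhds ⟨hz₀U, hz₀S⟩] with z hz
    exact h z hz.1 (fun h => hz.2 (Or.inl h)) (fun h => hz.2 (Or.inr h))
  exact hΦ.eqOn_zero_of_preconnected_of_eventuallyEq_zero (isPreconnected_compl_of_finite hS)
    hz₀S hev (not_or.2 ⟨hz, hzB⟩)

theorem apply_eq_zero_of_apply_ofReal_eq_zero (hA : A.Finite) (hB : B.Finite)
    (hH : ∀ z ∉ A, ∀ w ∉ B, AnalyticAt ℂ H (z, w)) {p q : ℂ → ℂ}
    (hp : Differentiable ℂ p) (hq : Differentiable ℂ q)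
    (hp_inj : Function.Injective p) (hq_inj : Function.Injective q)
    (h : ∀ r : ℝ, p r ∉ A → q r ∉ B → H (p r, q r) = 0)
    {s : ℂ} (hps : p s ∉ A) (hqs : q s ∉ B) : H (p s, q s) = 0 := by
  have hbad : (p ⁻¹' A ∪ q ⁻¹' B).Finite :=
    (hA.preimage hp_inj.injOn).union (hB.preimage hq_inj.injOn)
  have hφ : AnalyticOnNhd ℂ (fun s => H (p s, q s)) (p ⁻¹' A ∪ q ⁻¹' B)ᶜ := by
    intro s hs
    rw [mem_compl_iff, mem_union, not_or] at hs
    exact (hH _ hs.1 _ hs.2).comp (f := fun s => (p s, q s))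
      ((hp.analyticAt s).prod (hq.analyticAt s))
  refine hφ.eqOn_zero_of_ofReal_eq_zero hbad (fun r hr => ?_) (not_or.2 ⟨hps, hqs⟩)
  rw [mem_union, not_or] at hr
  exact h r hr.1 hr.2

theorem eq_zero_of_apply_conj_eq_zero (hA : A.Finite) (hB : B.Finite)
    (hH : ∀ z ∉ A, ∀ w ∉ B, AnalyticAt ℂ H (z, w))
    (h : ∀ z ∉ A, conj z ∉ B → H (z, conj z) = 0) {z w : ℂ} (hz : z ∉ A) (hw : w ∉ B) :
    H (z, w) = 0 := by
  -- `(t + I y, t - I y) = (ζ, conj ζ)` for real `t`, and `(z, w) = (t + I s, t - I s)` for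
  -- `t = (z + w) / 2`, `s = (z - w) / (2 I)`: two one-variable identity theorems suffice.
  have hline : ∀ (y : ℝ) (t : ℂ), t + I * y ∉ A → t - I * y ∉ B →
      H (t + I * y, t - I * y) = 0 :=
    fun y t => apply_eq_zero_of_apply_ofReal_eq_zero hA hB hH (by fun_prop) (by fun_prop)
      (add_left_injective _) sub_left_injective
      fun r hrA hrB => by
        simpa [sub_eq_add_neg] using h _ hrA (by simpa [sub_eq_add_neg] using hrB)
  have hz' : (z + w) / 2 + I * ((z - w) / (2 * I)) = z := by field_simp; ring
  have hw' : (z + w) / 2 - I * ((z - w) / (2 * I)) = w := by field_simp; ring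
  have hzw := apply_eq_zero_of_apply_ofReal_eq_zero hA hB hH
    (p := fun s => (z + w) / 2 + I * s) (q := fun s => (z + w) / 2 - I * s)
    (by fun_prop) (by fun_prop) (fun s₁ s₂ h => by simpa [I_ne_zero] using h)
    (fun s₁ s₂ h => by simpa [I_ne_zero] using h) (fun r => hline r _)
    (s := (z - w) / (2 * I)) (by rwa [hz']) (by rwa [hw'])
  rwa [hz', hw'] at hzw

end ConjugateVariables

section UpperSymm

variable {ι : Type*} [LinearOrder ι]

def upperSymm (α : ι → ι → ℝ) (i j : ι) : ℝ :=
  (if i ≤ j then α i j else 0) + (if j ≤ i then α j i else 0)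

theorem upperSymm_eq_zero_iff {α : ι → ι → ℝ} {i j : ι} (hij : i ≤ j) :
    upperSymm α i j = 0 ↔ α i j = 0 := by
  rcases hij.eq_or_lt with rfl | hlt
  · simp [upperSymm]
  · simp [upperSymm, hij, hlt.not_ge]

theorem sum_upperSymm_mul_mul_conj [Fintype ι] (α : ι → ι → ℝ) (v : ι → ℂ) :
    ∑ i, ∑ j, (upperSymm α i j : ℂ) * v i * conj (v j)
      = ((2 * ∑ j, ∑ i ∈ Finset.univ.filter (· ≤ j), α i j * (v i * conj (v j)).re : ℝ) : ℂ) := by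
  set α' : ι → ι → ℝ := fun i j => if i ≤ j then α i j else 0
  calc ∑ i, ∑ j, (upperSymm α i j : ℂ) * v i * conj (v j)
      = ∑ i, ∑ j, (α' i j : ℂ) * (v i * conj (v j) + conj (v i * conj (v j))) := by
        simp only [upperSymm, ofReal_add, add_mul, mul_add, Finset.sum_add_distrib, α']
        congr 1
        · simp only [mul_assoc]
        · rw [Finset.sum_comm]
          refine Finset.sum_congr rfl fun i _ => Finset.sum_congr rfl fun j _ => ?_
          rw [map_mul, conj_conj]
          ring
    _ = ((2 * ∑ j, ∑ i ∈ Finset.univ.filter (· ≤ j), α i j * (v i * conj (v j)).re : ℝ) : ℂ) := by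
        simp only [add_conj, Finset.sum_filter, Finset.mul_sum, α']
        rw [Finset.sum_comm]
        push_cast
        exact Finset.sum_congr rfl fun i _ => Finset.sum_congr rfl fun j _ => by
          split_ifs <;> push_cast <;> ring

end UpperSymm

noncomputable def dipole {N : ℕ} (a : Fin (N + 1) → ℂ) (k : Fin N) (z : ℂ) : ℂ :=
  (z - a k.succ)⁻¹ - (z - a 0)⁻¹

theorem analyticAt_dipole {N : ℕ} {a : Fin (N + 1) → ℂ} {z : ℂ} (hz : z ∉ Set.range a)
    (k : Fin N) : AnalyticAt ℂ (dipole a k) z := by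
  have hne : ∀ j, z - a j ≠ 0 := fun j h => hz ⟨j, (sub_eq_zero.1 h).symm⟩
  exact ((analyticAt_id.sub analyticAt_const).inv (hne _)).sub
    ((analyticAt_id.sub analyticAt_const).inv (hne _))

theorem dipole_conj {N : ℕ} (a : Fin (N + 1) → ℂ) (k : Fin N) (z : ℂ) :
    dipole (conj ∘ a) k (conj z) = conj (dipole a k z) := by
  simp [dipole]

theorem analyticAt_sum_mul_dipole_mul_dipole {N : ℕ} {a b : Fin (N + 1) → ℂ}
    (c : Fin N → Fin N → ℂ) {z w : ℂ} (hz : z ∉ Set.range a) (hw : w ∉ Set.range b) :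
    AnalyticAt ℂ (fun p : ℂ × ℂ => ∑ i, ∑ j, c i j * dipole a i p.1 * dipole b j p.2) (z, w) := by
  refine Finset.analyticAt_fun_sum _ fun i _ => Finset.analyticAt_fun_sum _ fun j _ => ?_
  exact (analyticAt_const.mul ((analyticAt_dipole hz i).comp (x := (z, w)) analyticAt_fst)).mul
    ((analyticAt_dipole hw j).comp (x := (z, w)) analyticAt_snd)

theorem eq_zero_of_sum_mul_dipole_eq_zero {N : ℕ} {a : Fin (N + 1) → ℂ}
    (ha : Function.Injective a) {c : Fin N → ℂ}
    (h : ∀ z ∉ Set.range a, ∑ k, c k * dipole a k z = 0) (m : Fin N) : c m = 0 := by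
  have hsum : ∀ z, ∑ k, c k * dipole a k z
      = ∑ k, (Fin.cons (-∑ k, c k) c : Fin (N + 1) → ℂ) k * (z - a k)⁻¹ := by
    intro z
    simp only [dipole, Fin.sum_univ_succ, Fin.cons_zero, Fin.cons_succ, mul_sub,
      Finset.sum_sub_distrib, ← Finset.sum_mul]
    ring
  simpa using
    eq_zero_of_sum_mul_inv_sub_eq_zero ha (fun z hz => (hsum z).symm.trans (h z hz)) m.succ

theorem eq_zero_of_sum_mul_dipole_mul_dipole_eq_zero {N : ℕ} {a b : Fin (N + 1) → ℂ}
    (ha : Function.Injective a) (hb : Function.Injective b) {c : Fin N → Fin N → ℂ}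
    (h : ∀ z ∉ Set.range a, ∀ w ∉ Set.range b, ∑ i, ∑ j, c i j * dipole a i z * dipole b j w = 0)
    (i j : Fin N) : c i j = 0 := by
  have hrow : ∀ w ∉ Set.range b, ∑ j, c i j * dipole b j w = 0 := by
    intro w hw
    refine eq_zero_of_sum_mul_dipole_eq_zero ha (c := fun i => ∑ j, c i j * dipole b j w)
      (fun z hz => ?_) i
    rw [← h z hz w hw]
    simp only [Finset.sum_mul]
    exact Finset.sum_congr rfl fun i _ => Finset.sum_congr rfl fun j _ => by ring
  exact eq_zero_of_sum_mul_dipole_eq_zero hb hrow j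

theorem Complex.conj_inv_eq_smul (w : ℂ) : conj w⁻¹ = (‖w‖ ^ 2)⁻¹ • w := by
  rw [RCLike.inv_def (K := ℂ), map_mul, conj_conj, real_smul, mul_comm]
  simp

theorem G_eq_conj_dipole {N : ℕ} (e : ℂ ≃ₗᵢ[ℝ] EuclideanSpace ℝ (Fin 2))
    (x : Fin (N + 1) → EuclideanSpace ℝ (Fin 2)) (k : Fin N) (z : ℂ) :
    G x k (e z) = e (conj (dipole (e.symm ∘ x) k z)) := by
  have hnorm : ∀ j, ‖e z - x j‖ = ‖z - e.symm (x j)‖ := fun j => by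
    rw [← e.norm_map, map_sub, e.apply_symm_apply]
  simp only [dipole, map_sub, conj_inv_eq_smul, LinearIsometryEquiv.map_smul, Function.comp_apply,
    e.apply_symm_apply, G, hnorm]

theorem inner_G_eq_re_dipole_mul_conj {N : ℕ} (e : ℂ ≃ₗᵢ[ℝ] EuclideanSpace ℝ (Fin 2))
    (x : Fin (N + 1) → EuclideanSpace ℝ (Fin 2)) (i j : Fin N) (z : ℂ) :
    inner ℝ (G x i (e z)) (G x j (e z))
      = (dipole (e.symm ∘ x) i z * conj (dipole (e.symm ∘ x) j z)).re := by
  rw [G_eq_conj_dipole, G_eq_conj_dipole, e.inner_map_map, Complex.inner, conj_conj, mul_comm]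

theorem eq_zero_of_sum_re_dipole_mul_conj_eq_zero {N : ℕ} {a : Fin (N + 1) → ℂ}
    (ha : Function.Injective a) {U : Set ℂ} (hU : IsOpen U) (hUne : U.Nonempty)
    {α : Fin N → Fin N → ℝ}
    (hα : ∀ z ∈ U, ∑ j, ∑ i ∈ Finset.univ.filter (· ≤ j),
      α i j * (dipole a i z * conj (dipole a j z)).re = 0)
    {i j : Fin N} (hij : i ≤ j) : α i j = 0 := by
  set H : ℂ × ℂ → ℂ := fun p =>
    ∑ i, ∑ j, (upperSymm α i j : ℂ) * dipole a i p.1 * dipole (conj ∘ a) j p.2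
  have hH : ∀ z ∉ Set.range a, ∀ w ∉ Set.range (conj ∘ a), AnalyticAt ℂ H (z, w) :=
    fun z hz w hw => analyticAt_sum_mul_dipole_mul_dipole _ hz hw
  have hHU : ∀ z ∈ U, H (z, conj z) = 0 := fun z hz => by
    simp only [H, dipole_conj, sum_upperSymm_mul_mul_conj, hα z hz, mul_zero, ofReal_zero]
  have hdiag : ∀ z ∉ Set.range a, conj z ∉ Set.range (conj ∘ a) → H (z, conj z) = 0 :=
    fun z hz hz' => apply_conj_eq_zero_of_eq_zero_on_open (Set.finite_range _)
      (Set.finite_range _) hH hU hUne (fun z hzU _ _ => hHU z hzU) hz hz'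
  have hH0 : ∀ z ∉ Set.range a, ∀ w ∉ Set.range (conj ∘ a), H (z, w) = 0 :=
    fun z hz w hw => eq_zero_of_apply_conj_eq_zero (Set.finite_range _) (Set.finite_range _) hH
      hdiag hz hw
  rw [← upperSymm_eq_zero_iff hij, ← ofReal_eq_zero]
  exact eq_zero_of_sum_mul_dipole_mul_dipole_eq_zero ha ((RingHom.injective _).comp ha) hH0 i j

theorem linear_independence_gradient_products_disk_general
    (N : ℕ)
    (x : Fin (N + 1) → EuclideanSpace ℝ (Fin 2))
    (hx : Function.Injective x)
    (Ω : Set (EuclideanSpace ℝ (Fin 2)))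
    (hΩopen : IsOpen Ω) (hΩne : Ω.Nonempty)
    (α : Fin N → Fin N → ℝ)
    (hα : ∀ p ∈ Ω,
      ∑ j : Fin N, ∑ i ∈ Finset.univ.filter (fun i : Fin N => i ≤ j),
        α i j * (inner ℝ (G x i p) (G x j p) : ℝ) = 0) :
    ∀ i j : Fin N, i ≤ j → α i j = 0 := by
  let e := Complex.orthonormalBasisOneI.repr
  refine fun i j => eq_zero_of_sum_re_dipole_mul_conj_eq_zero (e.symm.injective.comp hx)
    (hΩopen.preimage e.continuous) (hΩne.preimage e.surjective) (fun z hz => ?_)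
  simpa only [inner_G_eq_re_dipole_mul_conj] using hα (e z) hz

/-- Proposition 4.1: for distinct point electrodes on the unit circle and any nonempty
open `Ω` compactly contained in the unit disk, the family
`{∇u_i⁰ · ∇u_j⁰}_{1 ≤ i ≤ j ≤ N} = {(1/π²)⟨G_i, G_j⟩}_{1 ≤ i ≤ j ≤ N}`
is linearly independent as functions on `Ω`. -/
theorem linear_independence_gradient_products_disk
    (N : ℕ) (hN : 1 ≤ N)
    (x : Fin (N + 1) → EuclideanSpace ℝ (Fin 2))
    (hx : Function.Injective x)
    (hcirc : ∀ n, ‖x n‖ = 1)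
    (Ω : Set (EuclideanSpace ℝ (Fin 2)))
    (hΩopen : IsOpen Ω) (hΩne : Ω.Nonempty)
    (hΩD : closure Ω ⊆ Metric.ball (0 : EuclideanSpace ℝ (Fin 2)) 1)
    (α : Fin N → Fin N → ℝ)
    (hα : ∀ p ∈ Ω,
      ∑ j : Fin N, ∑ i ∈ Finset.univ.filter (fun i : Fin N => i ≤ j),
        α i j * (inner ℝ (G x i p) (G x j p) : ℝ) = 0) :
    ∀ i j : Fin N, i ≤ j → α i j = 0 :=
  linear_independence_gradient_products_disk_general N x hx Ω hΩopen hΩne α hα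
end

section
/- Let N ≥ 1, let x_0, x_1, …, x_N be distinct points of ℝ², and let α_{ij} ∈ ℝ for 1 ≤ i ≤ j ≤ N. Suppose that Σ_{j=1}^{N} Σ_{i=1}^{j} α_{ij} ⟨G_i(x), G_j(x)⟩ = 0 for every x ∈ ℝ² ∖ E. Then α_{jj} = 0 for every j = 1, …, N, and moreover Σ_{j=2}^{N} Σ_{i=1}^{j−1} α_{ij} = 0. (These are the first two steps, obtained by multiplying by ‖x − x_j‖² respectively ‖x − x_0‖² and letting x tend to x_j respectively x_0, in the proof of Proposition 4.1 of the paper.) -/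
open Finset

/-!
Near a point `a`, `⟨G_i(p), G_k(p)⟩ ≈ r_i r_k / ‖p - a‖²` with `r_n = [a = x_n] - [a = x_0]`.
Multiplying the identity by `‖p - a‖²` and letting `p → a` (the finitely many electrodes avoid a
punctured neighbourhood of `a`) gives `Σ_{i ≤ j} α_{ij} r_i r_j = 0` for every `a`. At `a = x_j`
only `r_j = 1` survives, so `α_{jj} = 0`; at `a = x_0` every `r_n = -1`, so `Σ_{i ≤ j} α_{ij} = 0`.
-/

open Filter Topology

theorem sq_norm_sub_ne_zero {E : Type*} [NormedAddGroup E] {c p : E} (h : p ≠ c) :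
    ‖p - c‖ ^ 2 ≠ 0 :=
  (pow_pos (norm_sub_pos_iff.mpr h) 2).ne'

section LogGrad

variable {E : Type*} [NormedAddCommGroup E] [InnerProductSpace ℝ E]

/-- The gradient of `p ↦ log ‖p - c‖`; the junk value at `p = c` is `0`. -/
noncomputable def logGrad (c p : E) : E := (‖p - c‖ ^ 2)⁻¹ • (p - c)

theorem continuousAt_logGrad {c p : E} (h : p ≠ c) : ContinuousAt (logGrad c) p :=
  ((continuousAt_id.sub continuousAt_const).norm.pow 2 |>.inv₀ (sq_norm_sub_ne_zero h)).smul
    (continuousAt_id.sub continuousAt_const)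

theorem sq_norm_smul_logGrad (c p : E) : ‖p - c‖ ^ 2 • logGrad c p = p - c := by
  rcases eq_or_ne p c with rfl | h
  · simp [logGrad]
  · exact smul_inv_smul₀ (sq_norm_sub_ne_zero h) _

theorem tendsto_sq_norm_mul_inner_logGrad_of_ne_left {a b : E} (hb : b ≠ a) (d : E) :
    Tendsto (fun p => ‖p - a‖ ^ 2 * inner ℝ (logGrad b p) (logGrad d p)) (𝓝 a) (𝓝 0) := by
  have hFb : ContinuousAt (logGrad b) a := continuousAt_logGrad hb.symm
  rcases eq_or_ne d a with rfl | hd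
  · simp_rw [← real_inner_smul_right, sq_norm_smul_logGrad]
    simpa using (hFb.inner (by fun_prop : Continuous fun p : E => p - d).continuousAt).tendsto
  · have h : ContinuousAt (fun p => ‖p - a‖ ^ 2 * inner ℝ (logGrad b p) (logGrad d p)) a :=
      (by fun_prop : Continuous fun p : E => ‖p - a‖ ^ 2).continuousAt.mul
        (hFb.inner (continuousAt_logGrad hd.symm))
    simpa using h.tendsto

theorem tendsto_sq_norm_mul_inner_logGrad (a b d : E) :
    Tendsto (fun p => ‖p - a‖ ^ 2 * inner ℝ (logGrad b p) (logGrad d p)) (𝓝[≠] a)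
      (𝓝 (({a} : Set E).indicator 1 b * ({a} : Set E).indicator 1 d)) := by
  by_cases hb : b = a
  · by_cases hd : d = a
    · subst hb hd
      simp only [Set.indicator_of_mem (Set.mem_singleton _), Pi.one_apply, mul_one]
      refine tendsto_const_nhds.congr' ?_
      filter_upwards [self_mem_nhdsWithin] with p hp
      rw [← real_inner_smul_right, sq_norm_smul_logGrad, logGrad, real_inner_smul_left,
        real_inner_self_eq_norm_sq, inv_mul_cancel₀ (sq_norm_sub_ne_zero hp)]
    · simp only [Set.indicator_of_notMem (Set.mem_singleton_iff.not.mpr hd), mul_zero]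
      refine ((tendsto_sq_norm_mul_inner_logGrad_of_ne_left hd b).mono_left
        nhdsWithin_le_nhds).congr fun p => ?_
      rw [real_inner_comm]
  · simp only [Set.indicator_of_notMem (Set.mem_singleton_iff.not.mpr hb), zero_mul]
    exact (tendsto_sq_norm_mul_inner_logGrad_of_ne_left hb d).mono_left nhdsWithin_le_nhds

theorem tendsto_sq_norm_mul_inner_logGrad_sub (a b c d e : E) :
    Tendsto (fun p => ‖p - a‖ ^ 2 *
        inner ℝ (logGrad b p - logGrad c p) (logGrad d p - logGrad e p)) (𝓝[≠] a)
      (𝓝 ((({a} : Set E).indicator 1 b - ({a} : Set E).indicator 1 c) *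
        (({a} : Set E).indicator 1 d - ({a} : Set E).indicator 1 e))) := by
  have h := (((tendsto_sq_norm_mul_inner_logGrad a b d).sub
    (tendsto_sq_norm_mul_inner_logGrad a b e)).sub
    (tendsto_sq_norm_mul_inner_logGrad a c d)).add (tendsto_sq_norm_mul_inner_logGrad a c e)
  convert h using 2
  · simp only [inner_sub_left, inner_sub_right]
    ring
  · ring

end LogGrad

section Electrodes

variable {N : ℕ} (x : Fin (N + 1) → EuclideanSpace ℝ (Fin 2))

/-- `‖p - a‖ • G x n p` behaves like `residue x a n • (p - a) / ‖p - a‖` as `p → a`. -/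
noncomputable def residue (a : EuclideanSpace ℝ (Fin 2)) (n : Fin N) : ℝ :=
  ({a} : Set _).indicator 1 (x n.succ) - ({a} : Set _).indicator 1 (x 0)

theorem tendsto_sq_norm_mul_inner_G (a : EuclideanSpace ℝ (Fin 2)) (i k : Fin N) :
    Tendsto (fun p => ‖p - a‖ ^ 2 * inner ℝ (G x i p) (G x k p)) (𝓝[≠] a)
      (𝓝 (residue x a i * residue x a k)) :=
  tendsto_sq_norm_mul_inner_logGrad_sub a _ _ _ _

theorem sum_mul_residue_eq_zero (α : Fin N → Fin N → ℝ)
    (hα : ∀ p ∉ Set.range x, ∑ j : Fin N, ∑ i ∈ univ.filter (· ≤ j),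
      α i j * inner ℝ (G x i p) (G x j p) = 0)
    (a : EuclideanSpace ℝ (Fin 2)) :
    ∑ j : Fin N, ∑ i ∈ univ.filter (· ≤ j), α i j * (residue x a i * residue x a j) = 0 := by
  have hlim : Tendsto (fun p => ‖p - a‖ ^ 2 * ∑ j : Fin N, ∑ i ∈ univ.filter (· ≤ j),
      α i j * inner ℝ (G x i p) (G x j p)) (𝓝[≠] a)
      (𝓝 (∑ j : Fin N, ∑ i ∈ univ.filter (· ≤ j), α i j * (residue x a i * residue x a j))) := by
    simp_rw [mul_sum, mul_left_comm _ (α _ _)]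
    exact tendsto_finsetSum _ fun j _ => tendsto_finsetSum _ fun i _ =>
      (tendsto_sq_norm_mul_inner_G x a i j).const_mul _
  have hzero : ∀ᶠ p in 𝓝[≠] a, p ∉ Set.range x :=
    nhdsNE_le_cofinite a (Set.finite_range x).eventually_cofinite_notMem
  refine tendsto_nhds_unique hlim (tendsto_const_nhds.congr' ?_)
  filter_upwards [hzero] with p hp
  rw [hα p hp, mul_zero]

variable {x}

theorem residue_succ (hx : Function.Injective x) (j n : Fin N) :
    residue x (x j.succ) n = if n = j then 1 else 0 := by
  simp [residue, Pi.single_apply, hx.eq_iff, Fin.succ_ne_zero]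

theorem residue_zero (hx : Function.Injective x) (n : Fin N) : residue x (x 0) n = -1 := by
  simp [residue, hx.eq_iff, Fin.succ_ne_zero]

end Electrodes

theorem diagonal_coefficients_vanish_general
    (N : ℕ)
    (x : Fin (N + 1) → EuclideanSpace ℝ (Fin 2))
    (hx : Function.Injective x)
    (α : Fin N → Fin N → ℝ)
    (hα : ∀ p ∉ Set.range x,
      ∑ j : Fin N, ∑ i ∈ Finset.univ.filter (fun i : Fin N => i ≤ j),
        α i j * (inner ℝ (G x i p) (G x j p) : ℝ) = 0) :
    (∀ j : Fin N, α j j = 0) ∧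
    ∑ j : Fin N, ∑ i ∈ Finset.univ.filter (fun i : Fin N => i < j), α i j = 0 := by
  have hdiag (j : Fin N) : α j j = 0 := by
    simpa [residue_succ hx] using sum_mul_residue_eq_zero x α hα (x j.succ)
  refine ⟨hdiag, ?_⟩
  simpa [residue_zero hx, filter_ge_eq_Iic, filter_gt_eq_Iio, ← sum_Iio_add_eq_sum_Iic, hdiag]
    using sum_mul_residue_eq_zero x α hα (x 0)

/-- First two steps of the proof of Proposition 4.1: if
`Σ_{1 ≤ i ≤ j ≤ N} α_{ij} ⟨G_i(x), G_j(x)⟩ = 0` on all of `ℝ² ∖ E`, then all diagonal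
coefficients `α_{jj}` vanish and the off-diagonal coefficients sum to zero. -/
theorem diagonal_coefficients_vanish
    (N : ℕ) (hN : 1 ≤ N)
    (x : Fin (N + 1) → EuclideanSpace ℝ (Fin 2))
    (hx : Function.Injective x)
    (α : Fin N → Fin N → ℝ)
    (hα : ∀ p ∉ Set.range x,
      ∑ j : Fin N, ∑ i ∈ Finset.univ.filter (fun i : Fin N => i ≤ j),
        α i j * (inner ℝ (G x i p) (G x j p) : ℝ) = 0) :
    (∀ j : Fin N, α j j = 0) ∧
    ∑ j : Fin N, ∑ i ∈ Finset.univ.filter (fun i : Fin N => i < j), α i j = 0 :=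
  diagonal_coefficients_vanish_general N x hx α hα
end

section
/- Let p ∈ ℝ², let U ⊆ ℝ² be an open neighborhood of p, and let g, h : ℝ² → ℝ be real-analytic at every point of U. If h(x) = log‖x − p‖ · g(x) for every x ∈ U ∖ {p}, then g vanishes on some neighborhood of p. (This is the step in the proof of Proposition 4.1 of the paper asserting that, since v_N has a logarithmic singularity at x_N, the product v_N · g can be analytic about x_N only if g vanishes in a neighborhood of x_N.) -/
/-!
Suppose `g` does not vanish near `p`. By the identity theorem along lines, some line
`t ↦ p + t • v` carries a restriction `G` of `g` that is not locally zero at `t = 0`. On that line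
`h` restricts to an analytic `H` with `H t = (log t + log ‖v‖) · G t` for small `t > 0`, so the
meromorphic function `(H - log ‖v‖ · G) / G` agrees with `log` on `(0, ε)`. That is impossible:
near `0` a meromorphic function is `t ^ k · u t` with `u 0 ≠ 0`, whereas `t ^ (-k) · log t` tends
to `0` or to `-∞` as `t → 0⁺`.
-/

open Filter Topology Real Set

theorem AnalyticAt.comp_add_smul {𝕜 E F : Type*} [NontriviallyNormedField 𝕜]
    [NormedAddCommGroup E] [NormedSpace 𝕜 E] [NormedAddCommGroup F] [NormedSpace 𝕜 F]
    {g : E → F} {p v : E} {t : 𝕜} (hg : AnalyticAt 𝕜 g (p + t • v)) :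
    AnalyticAt 𝕜 (fun s : 𝕜 => g (p + s • v)) t :=
  AnalyticAt.comp (f := fun s : 𝕜 => p + s • v) hg (by fun_prop)

theorem Real.not_tendsto_zpow_mul_log_nhdsGT_zero (k : ℤ) {c : ℝ} (hc : c ≠ 0) :
    ¬Tendsto (fun t : ℝ => t ^ k * log t) (𝓝[>] 0) (𝓝 c) := by
  rcases lt_or_ge 0 k with hk | hk
  · have hzero : Tendsto (fun t : ℝ => t ^ k * log t) (𝓝[>] 0) (𝓝 0) :=
      (tendsto_log_mul_rpow_nhdsGT_zero (Int.cast_pos.2 hk)).congr fun t => by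
        rw [rpow_intCast, mul_comm]
    exact fun h => hc (tendsto_nhds_unique h hzero)
  · have hbot : Tendsto (fun t : ℝ => t ^ k * log t) (𝓝[>] 0) atBot := by
      refine tendsto_atBot_mono' _ ?_ tendsto_log_nhdsGT_zero
      filter_upwards [Ioo_mem_nhdsGT zero_lt_one] with t ⟨ht0, ht1⟩
      calc t ^ k * log t ≤ 1 * log t :=
            mul_le_mul_of_nonpos_right (one_le_zpow_of_nonpos₀ ht0 ht1.le hk)
              (log_nonpos ht0.le ht1.le)
        _ = log t := one_mul _
    exact not_tendsto_nhds_of_tendsto_atBot hbot c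

theorem MeromorphicAt.not_eventuallyEq_log_nhdsGT_zero {f : ℝ → ℝ} (hf : MeromorphicAt f 0) :
    ¬f =ᶠ[𝓝[>] 0] Real.log := by
  intro hf_log
  cases hord : meromorphicOrderAt f 0 with
  | top =>
    obtain ⟨t, hft, hlog, ht0, ht1⟩ :=
      ((meromorphicOrderAt_eq_top_iff.1 hord).filter_mono (nhdsGT_le_nhdsNE 0)
        |>.and (hf_log.and (Ioo_mem_nhdsGT zero_lt_one))).exists
    exact (log_neg ht0 ht1).ne (hlog ▸ hft)
  | coe k =>
    obtain ⟨u, hu, hu0, hfu⟩ := (meromorphicOrderAt_eq_int_iff hf).1 hord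
    refine Real.not_tendsto_zpow_mul_log_nhdsGT_zero (-k) hu0 ?_
    refine (hu.continuousAt.tendsto.mono_left nhdsWithin_le_nhds).congr' ?_
    filter_upwards [hfu.filter_mono (nhdsGT_le_nhdsNE 0), hf_log, self_mem_nhdsWithin]
      with t hft hlog (ht : 0 < t)
    rw [← hlog, hft, sub_zero, smul_eq_mul, ← mul_assoc, ← zpow_add₀ ht.ne', neg_add_cancel,
      zpow_zero, one_mul]

theorem AnalyticAt.eventually_eq_zero_of_eventuallyEq_log_mul {G H : ℝ → ℝ}
    (hG : AnalyticAt ℝ G 0) (hH : AnalyticAt ℝ H 0)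
    (hHG : H =ᶠ[𝓝[>] 0] fun t => Real.log t * G t) : ∀ᶠ t in 𝓝 0, G t = 0 := by
  refine hG.eventually_eq_zero_or_eventually_ne_zero.resolve_right fun hG_ne => ?_
  refine (hH.meromorphicAt.div hG.meromorphicAt).not_eventuallyEq_log_nhdsGT_zero ?_
  filter_upwards [hHG, hG_ne.filter_mono (nhdsGT_le_nhdsNE 0)] with t hHt hGt
  rw [Pi.div_apply, hHt, mul_div_cancel_right₀ _ hGt]

theorem AnalyticOnNhd.eventually_eq_zero_of_forall_line {E F : Type*}
    [NormedAddCommGroup E] [NormedSpace ℝ E] [Nontrivial E]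
    [NormedAddCommGroup F] [NormedSpace ℝ F]
    {g : E → F} {U : Set E} {p : E} (hg : AnalyticOnNhd ℝ g U) (hU : U ∈ 𝓝 p)
    (hline : ∀ v ≠ 0, ∀ᶠ t in 𝓝 (0 : ℝ), g (p + t • v) = 0) : ∀ᶠ x in 𝓝 p, g x = 0 := by
  obtain ⟨r, hr, hball⟩ := Metric.mem_nhds_iff.1 hU
  filter_upwards [Metric.ball_mem_nhds p hr] with x hx
  rcases eq_or_ne x p with rfl | hxp
  · obtain ⟨v, hv⟩ := exists_ne (0 : E)
    simpa using (hline v hv).self_of_nhds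
  set S := (fun t : ℝ => p + t • (x - p)) ⁻¹' Metric.ball p r
  have hS : IsPreconnected S := by
    convert ((convex_ball p r).affine_preimage (AffineMap.lineMap p x)).isPreconnected using 2
    ext t
    rw [AffineMap.lineMap_apply_module', add_comm]
  have hzero : EqOn (fun t : ℝ => g (p + t • (x - p))) 0 S :=
    AnalyticOnNhd.eqOn_zero_of_preconnected_of_eventuallyEq_zero
      (fun t ht => (hg _ (hball ht)).comp_add_smul) hS (by simpa [S] using hr)
      (hline _ (sub_ne_zero.2 hxp))
  simpa using hzero (show (1 : ℝ) ∈ S by simpa [S] using hx)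

/-- Logarithmic-singularity step in the proof of Proposition 4.1: if `g` and `h` are
real-analytic on an open neighborhood `U` of `p` and `h(x) = log‖x − p‖ · g(x)` on
`U ∖ {p}`, then `g` vanishes on some neighborhood of `p`. -/
theorem vanishes_near_of_log_singularity
    (p : EuclideanSpace ℝ (Fin 2))
    (U : Set (EuclideanSpace ℝ (Fin 2))) (hU : IsOpen U) (hpU : p ∈ U)
    (g h : EuclideanSpace ℝ (Fin 2) → ℝ)
    (hg : AnalyticOnNhd ℝ g U) (hh : AnalyticOnNhd ℝ h U)
    (heq : ∀ x ∈ U, x ≠ p → h x = Real.log ‖x - p‖ * g x) :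
    ∀ᶠ x in nhds p, g x = 0 := by
  refine hg.eventually_eq_zero_of_forall_line (hU.mem_nhds hpU) fun v hv => ?_
  have hG : AnalyticAt ℝ (fun t : ℝ => g (p + t • v)) 0 :=
    AnalyticAt.comp_add_smul (by simpa using hg p hpU)
  have hH : AnalyticAt ℝ (fun t : ℝ => h (p + t • v) - Real.log ‖v‖ * g (p + t • v)) 0 :=
    (AnalyticAt.comp_add_smul (by simpa using hh p hpU)).sub (analyticAt_const.mul hG)
  have hline_mem : ∀ᶠ t in 𝓝 (0 : ℝ), p + t • v ∈ U :=
    (Continuous.tendsto' (by fun_prop) 0 p (by simp)).eventually (hU.mem_nhds hpU)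
  refine AnalyticAt.eventually_eq_zero_of_eventuallyEq_log_mul hG hH ?_
  filter_upwards [nhdsWithin_le_nhds hline_mem, self_mem_nhdsWithin] with t htU (ht : 0 < t)
  rw [heq _ htU (by simp [ht.ne', hv]), add_sub_cancel_left, norm_smul, norm_of_nonneg ht.le,
    log_mul ht.ne' (norm_ne_zero_iff.2 hv)]
  ring
end

section
/- Let U, V ⊆ ℂ be open, let Φ : ℂ → ℂ be complex-differentiable at every point of U with Φ(U) ⊆ V and Φ'(z) ≠ 0 for every z ∈ U, and let û_1, …, û_N : ℂ → ℝ be twice continuously differentiable and harmonic on V (Δû_n = 0 on V). Let Ω ⊆ U be nonempty and open. If the family of functions w ↦ ⟨∇û_i(w), ∇û_j(w)⟩, indexed by pairs (i, j) with 1 ≤ i ≤ j ≤ N, is linearly independent as functions on Φ(Ω), then the family z ↦ ⟨∇(û_i ∘ Φ)(z), ∇(û_j ∘ Φ)(z)⟩, 1 ≤ i ≤ j ≤ N, is linearly independent as functions on Ω. (This is the core of the proof of Proposition 4.2 of the paper: a conformal change of variables transfers the linear independence of the gradient products from the disk to a general two-dimensional domain.) -/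
/-! A holomorphic map with nonvanishing derivative is conformal: the chain rule gives
`∇(u ∘ Φ)(z) = conj (Φ' z) · ∇u(Φ z)`, so every product `⟨∇(uᵢ ∘ Φ), ∇(uⱼ ∘ Φ)⟩(z)` is the
corresponding product at `Φ z` scaled by the same factor `|Φ' z|² ≠ 0`. A linear relation
among the products on `Ω` is therefore a linear relation among the original products on
`Φ(Ω)`. -/

open Finset

/-- The Laplacian of `f : ℂ → ℝ`, with `ℂ` regarded as the Euclidean plane via
`z = x + iy`: `Δf = ∂²f/∂x² + ∂²f/∂y²`. -/
noncomputable def lap (f : ℂ → ℝ) (z : ℂ) : ℝ :=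
  fderiv ℝ (fun w => fderiv ℝ f w 1) z 1 +
    fderiv ℝ (fun w => fderiv ℝ f w Complex.I) z Complex.I

open ComplexConjugate

theorem Complex.inner_mul_mul_left (c a b : ℂ) :
    inner ℝ (c * a) (c * b) = Complex.normSq c * inner ℝ a b := by
  rw [Complex.inner, Complex.inner, map_mul,
    show c * b * (conj c * conj a) = c * conj c * (b * conj a) by ring,
    Complex.mul_conj, Complex.re_ofReal_mul]

theorem gradient_comp_of_differentiableAt_complex {f : ℂ → ℝ} {Φ : ℂ → ℂ} {z : ℂ}
    (hf : DifferentiableAt ℝ f (Φ z)) (hΦ : DifferentiableAt ℂ Φ z) :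
    gradient (f ∘ Φ) z = conj (deriv Φ z) * gradient f (Φ z) := by
  refine HasGradientAt.gradient ?_
  rw [hasGradientAt_iff_hasFDerivAt]
  refine (hf.hasFDerivAt.comp z (hΦ.hasDerivAt.hasFDerivAt.restrictScalars ℝ)).congr_fderiv ?_
  ext1 y
  simp [← inner_gradient_left, Complex.inner]
  ring

theorem inner_gradient_comp_of_differentiableAt_complex {f g : ℂ → ℝ} {Φ : ℂ → ℂ} {z : ℂ}
    (hf : DifferentiableAt ℝ f (Φ z)) (hg : DifferentiableAt ℝ g (Φ z))
    (hΦ : DifferentiableAt ℂ Φ z) :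
    inner ℝ (gradient (f ∘ Φ) z) (gradient (g ∘ Φ) z) =
      Complex.normSq (deriv Φ z) * inner ℝ (gradient f (Φ z)) (gradient g (Φ z)) := by
  rw [gradient_comp_of_differentiableAt_complex hf hΦ,
    gradient_comp_of_differentiableAt_complex hg hΦ, Complex.inner_mul_mul_left,
    Complex.normSq_conj]

theorem linear_independence_transfer_conformal_general
    (U V : Set ℂ) (hV : IsOpen V)
    (Φ : ℂ → ℂ) (hΦ : ∀ z ∈ U, DifferentiableAt ℂ Φ z) (hΦUV : Set.MapsTo Φ U V)
    (hΦ' : ∀ z ∈ U, deriv Φ z ≠ 0)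
    (N : ℕ) (u : Fin N → ℂ → ℝ)
    (hu : ∀ n, ContDiffOn ℝ 2 (u n) V)
    (Ω : Set ℂ) (hΩU : Ω ⊆ U)
    (hind : ∀ α : Fin N → Fin N → ℝ,
      (∀ w ∈ Φ '' Ω,
        ∑ j : Fin N, ∑ i ∈ Finset.univ.filter (fun i : Fin N => i ≤ j),
          α i j * (inner ℝ (gradient (u i) w) (gradient (u j) w) : ℝ) = 0) →
      ∀ i j : Fin N, i ≤ j → α i j = 0) :
    ∀ α : Fin N → Fin N → ℝ,
      (∀ z ∈ Ω,
        ∑ j : Fin N, ∑ i ∈ Finset.univ.filter (fun i : Fin N => i ≤ j),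
          α i j * (inner ℝ (gradient (u i ∘ Φ) z) (gradient (u j ∘ Φ) z) : ℝ) = 0) →
      ∀ i j : Fin N, i ≤ j → α i j = 0 := by
  intro α hα
  refine hind α ?_
  rintro _ ⟨z, hz, rfl⟩
  have hzU := hΩU hz
  have hu_diff (n : Fin N) : DifferentiableAt ℝ (u n) (Φ z) :=
    ((hu n).differentiableOn two_ne_zero).differentiableAt (hV.mem_nhds (hΦUV hzU))
  have hscaled : Complex.normSq (deriv Φ z) *
      ∑ j : Fin N, ∑ i ∈ Finset.univ.filter (fun i : Fin N => i ≤ j),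
        α i j * inner ℝ (gradient (u i) (Φ z)) (gradient (u j) (Φ z)) = 0 := by
    simp_rw [← hα z hz, mul_sum, inner_gradient_comp_of_differentiableAt_complex
      (hu_diff _) (hu_diff _) (hΦ z hzU)]
    ring_nf
  exact (mul_eq_zero.mp hscaled).resolve_left (Complex.normSq_eq_zero.not.mpr (hΦ' z hzU))

/-- Core of the proof of Proposition 4.2: a conformal change of variables transfers the
linear independence of the family of pointwise inner products of gradients of harmonic
functions from `Φ(Ω)` to `Ω`. Here `ℂ` carries its standard structure of a
two-dimensional real inner product space. -/
theorem linear_independence_transfer_conformal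
    (U V : Set ℂ) (hU : IsOpen U) (hV : IsOpen V)
    (Φ : ℂ → ℂ) (hΦ : ∀ z ∈ U, DifferentiableAt ℂ Φ z) (hΦUV : Set.MapsTo Φ U V)
    (hΦ' : ∀ z ∈ U, deriv Φ z ≠ 0)
    (N : ℕ) (u : Fin N → ℂ → ℝ)
    (hu : ∀ n, ContDiffOn ℝ 2 (u n) V)
    (huh : ∀ n, ∀ w ∈ V, lap (u n) w = 0)
    (Ω : Set ℂ) (hΩU : Ω ⊆ U) (hΩopen : IsOpen Ω) (hΩne : Ω.Nonempty)
    (hind : ∀ α : Fin N → Fin N → ℝ,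
      (∀ w ∈ Φ '' Ω,
        ∑ j : Fin N, ∑ i ∈ Finset.univ.filter (fun i : Fin N => i ≤ j),
          α i j * (inner ℝ (gradient (u i) w) (gradient (u j) w) : ℝ) = 0) →
      ∀ i j : Fin N, i ≤ j → α i j = 0) :
    ∀ α : Fin N → Fin N → ℝ,
      (∀ z ∈ Ω,
        ∑ j : Fin N, ∑ i ∈ Finset.univ.filter (fun i : Fin N => i ≤ j),
          α i j * (inner ℝ (gradient (u i ∘ Φ) z) (gradient (u j ∘ Φ) z) : ℝ) = 0) →
      ∀ i j : Fin N, i ≤ j → α i j = 0 :=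
  linear_independence_transfer_conformal_general U V hV Φ hΦ hΦUV hΦ' N u hu Ω hΩU hind
end
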